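/- The measure μ_β(dx) = (1 + sgn(x)β) dx is invariant for the skew Brownian motion transition kernel: for every nonnegative measurable f: ℝ → ℝ and every t > 0, ∫_ℝ (∫_ℝ p_β(t,x,y) f(y) dy) μ_β(dx) = ∫_ℝ f(y) μ_β(dy), where p_β(t,x,y) = (1/√(2πt))e^{-(x-y)²/(2t)} + β·sgn(y)·(1/√(2πt))e^{-(|x|+|y|)²/(2t)}. -/

import Mathlib

open MeasureTheory Set

/-- Transition density of the skew Brownian motion with parameter `β`. -/
noncomputable def skewDensity (β t x y : ℝ) : ℝ :=
  (1 / Real.sqrt (2 * Real.pi * t)) * Real.exp (-(x - y) ^ 2 / (2 * t))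
    + β * Real.sign y * ((1 / Real.sqrt (2 * Real.pi * t)) * Real.exp (-(|x| + |y|) ^ 2 / (2 * t)))

/-!
Against `μ_β` the kernel satisfies detailed balance,
`p_β(t,x,y) (1 + sgn x β) = (1 + sgn y β) p_β(t,y,x)`: both Gaussian terms are symmetric in `x, y`,
and when `sgn x ≠ sgn y` the two terms coincide because `|x - y| = |x| + |y|`. After Tonelli the
claim thus reduces to `∫ p_β(t,y,x) dx = 1`, which holds since the correction term is odd in `x`.
-/

open ProbabilityTheory Real

lemma Real.monotone_sign : Monotone Real.sign := by
  intro a b hab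
  rcases lt_trichotomy a 0 with ha | rfl | ha <;> rcases lt_trichotomy b 0 with hb | rfl | hb <;>
    simp [Real.sign_of_neg, Real.sign_of_pos, *] <;> linarith

@[fun_prop]
lemma Real.measurable_sign : Measurable Real.sign := Real.monotone_sign.measurable

lemma Real.abs_sign_le_one (x : ℝ) : |Real.sign x| ≤ 1 := by
  rcases Real.sign_apply_eq x with h | h | h <;> simp [h]

lemma Real.abs_sign_mul_le_one {β : ℝ} (hβ : |β| ≤ 1) (x : ℝ) : |Real.sign x * β| ≤ 1 := by
  rw [abs_mul]; exact mul_le_one₀ (Real.abs_sign_le_one x) (abs_nonneg β) hβ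

lemma Real.sign_eq_of_mul_pos {x y : ℝ} (h : 0 < x * y) : Real.sign x = Real.sign y := by
  rcases mul_pos_iff.mp h with ⟨hx, hy⟩ | ⟨hx, hy⟩
  · rw [Real.sign_of_pos hx, Real.sign_of_pos hy]
  · rw [Real.sign_of_neg hx, Real.sign_of_neg hy]

namespace SkewBrownian

noncomputable def heatKernel (t u : ℝ) : ℝ :=
  (1 / √(2 * π * t)) * exp (-u ^ 2 / (2 * t))

section HeatKernel

variable {t : ℝ}

lemma heatKernel_nonneg (t u : ℝ) : 0 ≤ heatKernel t u := by
  unfold heatKernel; positivity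

lemma heatKernel_congr_of_sq_eq {a b : ℝ} (h : a ^ 2 = b ^ 2) : heatKernel t a = heatKernel t b := by
  rw [heatKernel, heatKernel, h]

lemma heatKernel_neg (u : ℝ) : heatKernel t (-u) = heatKernel t u :=
  heatKernel_congr_of_sq_eq (neg_sq u)

lemma heatKernel_le_of_abs_le (ht : 0 ≤ t) {a b : ℝ} (h : |a| ≤ |b|) :
    heatKernel t b ≤ heatKernel t a := by
  unfold heatKernel
  gcongr _ * exp (-?_ / _)
  exact sq_le_sq.mpr h

lemma heatKernel_eq_gaussianPDFReal (ht : 0 < t) : heatKernel t = gaussianPDFReal 0 t.toNNReal := by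
  funext u
  simp [heatKernel, gaussianPDFReal, Real.coe_toNNReal _ ht.le, one_div]

lemma integrable_heatKernel (ht : 0 < t) : Integrable (heatKernel t) := by
  rw [heatKernel_eq_gaussianPDFReal ht]
  exact integrable_gaussianPDFReal 0 _

lemma integral_heatKernel (ht : 0 < t) : ∫ u, heatKernel t u = 1 := by
  rw [heatKernel_eq_gaussianPDFReal ht]
  exact integral_gaussianPDFReal_eq_one 0 (Real.toNNReal_pos.mpr ht).ne'

end HeatKernel

variable {β t : ℝ}

lemma skewDensity_eq (β t x y : ℝ) :
    skewDensity β t x y = heatKernel t (x - y) + β * (Real.sign y * heatKernel t (|x| + |y|)) :=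
  congrArg _ (mul_assoc _ _ _)

lemma skewDensity_nonneg (hβ : |β| ≤ 1) (ht : 0 ≤ t) (x y : ℝ) : 0 ≤ skewDensity β t x y := by
  have hcoef := Real.abs_sign_mul_le_one hβ y
  have hmono : heatKernel t (|x| + |y|) ≤ heatKernel t (x - y) :=
    heatKernel_le_of_abs_le ht ((abs_sub _ _).trans (le_abs_self _))
  rw [skewDensity_eq]
  nlinarith [neg_le_of_abs_le hcoef, heatKernel_nonneg t (|x| + |y|)]

lemma one_add_sign_mul_nonneg (hβ : |β| ≤ 1) (x : ℝ) : 0 ≤ 1 + Real.sign x * β := by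
  linarith [neg_le_of_abs_le (Real.abs_sign_mul_le_one hβ x)]

lemma skewDensity_detailed_balance (β t x y : ℝ) :
    skewDensity β t x y * (1 + Real.sign x * β) = (1 + Real.sign y * β) * skewDensity β t y x := by
  have key : (Real.sign x - Real.sign y) * (heatKernel t (x - y) - heatKernel t (|x| + |y|)) = 0 := by
    rcases lt_or_ge 0 (x * y) with hxy | hxy
    · rw [Real.sign_eq_of_mul_pos hxy, sub_self, zero_mul]
    · -- `x` and `y` lie on opposite sides of `0`, so `|x - y| = |x| + |y|`
      have : (x - y) ^ 2 = (|x| + |y|) ^ 2 := by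
        rw [add_sq, sq_abs, sq_abs, mul_assoc, ← abs_mul, abs_of_nonpos hxy]; ring
      rw [heatKernel_congr_of_sq_eq this, sub_self, mul_zero]
  rw [skewDensity_eq, skewDensity_eq, ← neg_sub x y, heatKernel_neg, add_comm |y|]
  linear_combination β * key

lemma integrable_sign_mul_heatKernel_abs_add (ht : 0 < t) (y : ℝ) :
    Integrable fun x => Real.sign x * heatKernel t (|y| + |x|) := by
  refine (integrable_heatKernel ht).mono' ?_ (Filter.Eventually.of_forall fun x => ?_)
  · exact (Real.measurable_sign.mul (by unfold heatKernel; fun_prop)).aestronglyMeasurable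
  · rw [norm_mul, Real.norm_of_nonneg (heatKernel_nonneg _ _)]
    exact (mul_le_of_le_one_left (heatKernel_nonneg _ _) (Real.abs_sign_le_one x)).trans
      (heatKernel_le_of_abs_le ht.le ((le_add_of_nonneg_left (abs_nonneg y)).trans (le_abs_self _)))

lemma integral_skewDensity (ht : 0 < t) (y : ℝ) : ∫ x, skewDensity β t y x = 1 := by
  have hodd : ∫ x, Real.sign x * heatKernel t (|y| + |x|) = 0 := by
    have := integral_neg_eq_self (fun x => Real.sign x * heatKernel t (|y| + |x|)) volume
    simp only [Real.sign_neg, abs_neg, neg_mul, integral_neg] at this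
    linarith
  simp only [skewDensity_eq]
  rw [integral_add ((integrable_heatKernel ht).comp_sub_left y)
    ((integrable_sign_mul_heatKernel_abs_add ht y).const_mul β), integral_const_mul, hodd,
    integral_sub_left_eq_self, integral_heatKernel ht, mul_zero, add_zero]

lemma integrable_skewDensity (ht : 0 < t) (y : ℝ) : Integrable (skewDensity β t y) :=
  (((integrable_heatKernel ht).comp_sub_left y).add
    ((integrable_sign_mul_heatKernel_abs_add ht y).const_mul β)).congr
    (ae_of_all _ fun x => (skewDensity_eq β t y x).symm)

lemma lintegral_ofReal_skewDensity (hβ : |β| ≤ 1) (ht : 0 < t) (y : ℝ) :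
    ∫⁻ x, ENNReal.ofReal (skewDensity β t y x) = 1 := by
  rw [← ofReal_integral_eq_lintegral_ofReal (integrable_skewDensity ht y)
    (Filter.Eventually.of_forall (skewDensity_nonneg hβ ht.le y)), integral_skewDensity ht,
    ENNReal.ofReal_one]

@[fun_prop]
lemma measurable_skewDensity (β t : ℝ) : Measurable fun p : ℝ × ℝ => skewDensity β t p.1 p.2 := by
  unfold skewDensity
  fun_prop

end SkewBrownian

open SkewBrownian in
/-- The measure `μ_β(dx) = (1 + sgn(x)β) dx` is invariant for the skew Brownian motion kernel:
for every nonnegative measurable `f` and `t > 0`,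
`∫ (∫ p_β(t,x,y) f(y) dy) μ_β(dx) = ∫ f dμ_β`. -/
theorem skewDensity_invariant_measure (β : ℝ) (hβ : β ∈ Set.Icc (-1 : ℝ) 1)
    (f : ℝ → ℝ) (hf : Measurable f) (hf_nonneg : ∀ y, 0 ≤ f y) (t : ℝ) (ht : 0 < t) :
    (∫⁻ x : ℝ, (∫⁻ y : ℝ, ENNReal.ofReal (skewDensity β t x y * f y))
        * ENNReal.ofReal (1 + Real.sign x * β))
      = ∫⁻ y : ℝ, ENNReal.ofReal (f y * (1 + Real.sign y * β)) := by
  have hβ' : |β| ≤ 1 := abs_le.mpr hβ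
  calc _ = ∫⁻ x, ∫⁻ y, ENNReal.ofReal (f y * (1 + Real.sign y * β))
          * ENNReal.ofReal (skewDensity β t y x) := by
        refine lintegral_congr fun x => ?_
        rw [← lintegral_mul_const' _ _ ENNReal.ofReal_ne_top]
        refine lintegral_congr fun y => ?_
        rw [← ENNReal.ofReal_mul (mul_nonneg (skewDensity_nonneg hβ' ht.le x y) (hf_nonneg y)),
          ← ENNReal.ofReal_mul (mul_nonneg (hf_nonneg y) (one_add_sign_mul_nonneg hβ' y)),
          mul_right_comm, skewDensity_detailed_balance]
        ring_nf
    _ = ∫⁻ y, ∫⁻ x, ENNReal.ofReal (f y * (1 + Real.sign y * β))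
          * ENNReal.ofReal (skewDensity β t y x) :=
        lintegral_lintegral_swap (by fun_prop)
    _ = _ := by
        refine lintegral_congr fun y => ?_
        rw [lintegral_const_mul' _ _ ENNReal.ofReal_ne_top, lintegral_ofReal_skewDensity hβ' ht,
          mul_one]
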